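/- For δ ∈ [0,1/2) set ρ = 1/2 − δ and q_δ(L) = Σ_{n > ⌊(L−1)/2⌋} C_n·ρ^n·(1−ρ)^(n+1) (the probability that a random variable with the Catalan distribution of parameter ρ exceeds ⌊(L−1)/2⌋). Then for every ε > 0 there exist δ₀ > 0 and s > 0 such that for all δ ∈ (0, δ₀) and all integers L ≥ 1 with L ≤ s·δ^(−2), one has |q_δ(L)/q₀(L) − 1| < ε. -/

import Mathlib

noncomputable section

/-- The tail `q_δ(L) = Σ_{n > ⌊(L-1)/2⌋} C_n ρ^n (1-ρ)^(n+1)` of the Catalan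
distribution with parameter `ρ = 1/2 - δ`. -/
def qdel (δ : ℝ) (L : ℕ) : ℝ :=
  ∑' n : ℕ, if (L - 1) / 2 < n then
    (catalan n : ℝ) * (1/2 - δ) ^ n * (1 - (1/2 - δ)) ^ (n + 1) else 0

namespace CatalanTailAux

open Filter

/-! ### The normalized Catalan numbers `aC n = catalan n / 4 ^ n` -/

/-- Normalized Catalan number. -/
def aC (n : ℕ) : ℝ := (catalan n : ℝ) / 4 ^ n

lemma aC_nonneg (n : ℕ) : 0 ≤ aC n := div_nonneg (Nat.cast_nonneg _) (by positivity)

lemma cb_sq_le (n : ℕ) : (Nat.centralBinom n)^2 * (2*n+1) ≤ 16^n := by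
  induction n with
  | zero => simp [Nat.centralBinom]
  | succ n ih =>
    have h := Nat.succ_mul_centralBinom_succ n
    have hpos : 0 < (n+1)^2 := by positivity
    have key : (n+1)^2 * ((Nat.centralBinom (n+1))^2 * (2*(n+1)+1)) ≤ (n+1)^2 * 16^(n+1) := by
      calc (n+1)^2 * ((Nat.centralBinom (n+1))^2 * (2*(n+1)+1))
          = ((n+1) * Nat.centralBinom (n+1))^2 * (2*n+3) := by ring
        _ = (2*(2*n+1)*Nat.centralBinom n)^2 * (2*n+3) := by rw [h]
        _ = ((Nat.centralBinom n)^2 * (2*n+1)) * (4*(2*n+1)*(2*n+3)) := by ring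
        _ ≤ 16^n * (4*(2*n+1)*(2*n+3)) := mul_le_mul_left ih _
        _ ≤ 16^n * (16*(n+1)^2) := by
            refine mul_le_mul_right ?_ _
            ring_nf; omega
        _ = (n+1)^2 * 16^(n+1) := by ring
    exact Nat.le_of_mul_le_mul_left key hpos

lemma cb_sq_ge (n : ℕ) : 16^n ≤ (Nat.centralBinom n)^2 * (4*n+1) := by
  induction n with
  | zero => simp [Nat.centralBinom]
  | succ n ih =>
    have h := Nat.succ_mul_centralBinom_succ n
    have hpos : 0 < (n+1)^2 := by positivity
    have key : (n+1)^2 * 16^(n+1) ≤ (n+1)^2 * ((Nat.centralBinom (n+1))^2 * (4*(n+1)+1)) := by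
      calc (n+1)^2 * 16^(n+1)
          = 16^n * (16*(n+1)^2) := by ring
        _ ≤ ((Nat.centralBinom n)^2 * (4*n+1)) * (16*(n+1)^2) := mul_le_mul_left ih _
        _ = (Nat.centralBinom n)^2 * (16*(n+1)^2*(4*n+1)) := by ring
        _ ≤ (Nat.centralBinom n)^2 * (4*(2*n+1)^2*(4*n+5)) := by
            refine mul_le_mul_right ?_ _
            ring_nf; omega
        _ = (2*(2*n+1)*Nat.centralBinom n)^2 * (4*n+5) := by ring
        _ = ((n+1) * Nat.centralBinom (n+1))^2 * (4*n+5) := by rw [h]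
        _ = (n+1)^2 * ((Nat.centralBinom (n+1))^2 * (4*(n+1)+1)) := by ring
    exact Nat.le_of_mul_le_mul_left key hpos

lemma aC_eq (n : ℕ) : aC n = ((Nat.centralBinom n : ℝ) / 4 ^ n) / (n + 1) := by
  have h : ((n : ℝ) + 1) * (catalan n : ℝ) = Nat.centralBinom n := by
    exact_mod_cast (congrArg (Nat.cast : ℕ → ℝ) (succ_mul_catalan_eq_centralBinom n))
  have h4 : (0:ℝ) < 4 ^ n := by positivity
  rw [aC]
  field_simp
  linear_combination h

lemma pow16 (n : ℕ) : ((4:ℝ)^n)^2 = 16^n := by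
  rw [show (16:ℝ) = 4^2 by norm_num, ← pow_mul, ← pow_mul, Nat.mul_comm]

lemma b_sq_le (n : ℕ) : ((Nat.centralBinom n : ℝ) / 4 ^ n)^2 ≤ 1 / ((n:ℝ) + 1) := by
  have h : ((Nat.centralBinom n : ℝ))^2 * (2*(n:ℝ)+1) ≤ 16^n := by exact_mod_cast cb_sq_le n
  have hp : (0:ℝ) < 16^n := by positivity
  have hn1 : (0:ℝ) < (n:ℝ) + 1 := by positivity
  rw [div_pow, pow16, div_le_div_iff₀ hp hn1]
  nlinarith [h, sq_nonneg ((Nat.centralBinom n : ℝ)), (show (0:ℝ) ≤ n by positivity)]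

lemma b_sq_ge (n : ℕ) : 1 / (4*((n:ℝ) + 1)) ≤ ((Nat.centralBinom n : ℝ) / 4 ^ n)^2 := by
  have h : (16:ℝ)^n ≤ ((Nat.centralBinom n : ℝ))^2 * (4*(n:ℝ)+1) := by exact_mod_cast cb_sq_ge n
  have hp : (0:ℝ) < 16^n := by positivity
  have hn1 : (0:ℝ) < 4*((n:ℝ) + 1) := by positivity
  rw [div_pow, pow16, div_le_div_iff₀ hn1 hp]
  nlinarith [h, sq_nonneg ((Nat.centralBinom n : ℝ)), (show (0:ℝ) ≤ n by positivity)]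

lemma aC_le (n : ℕ) : aC n ≤ 1 / (((n:ℝ) + 1) * Real.sqrt ((n:ℝ) + 1)) := by
  have hn1 : (0:ℝ) < (n:ℝ) + 1 := by positivity
  have hs : (0:ℝ) < Real.sqrt ((n:ℝ) + 1) := Real.sqrt_pos.2 hn1
  have hb : (Nat.centralBinom n : ℝ) / 4 ^ n ≤ 1 / Real.sqrt ((n:ℝ)+1) := by
    refine le_of_pow_le_pow_left₀ two_ne_zero (by positivity) ?_
    have : (1 / Real.sqrt ((n:ℝ)+1))^2 = 1 / ((n:ℝ)+1) := by
      rw [div_pow, Real.sq_sqrt hn1.le]; norm_num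
    rw [this]; exact b_sq_le n
  rw [aC_eq, show 1 / (((n:ℝ)+1) * Real.sqrt ((n:ℝ)+1)) = (1 / Real.sqrt ((n:ℝ)+1))/((n:ℝ)+1) by
    field_simp]
  gcongr

lemma aC_ge (n : ℕ) : 1 / (2*(((n:ℝ) + 1) * Real.sqrt ((n:ℝ) + 1))) ≤ aC n := by
  have hn1 : (0:ℝ) < (n:ℝ) + 1 := by positivity
  have hs : (0:ℝ) < Real.sqrt ((n:ℝ) + 1) := Real.sqrt_pos.2 hn1
  have hb : 1 / (2*Real.sqrt ((n:ℝ)+1)) ≤ (Nat.centralBinom n : ℝ) / 4 ^ n := by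
    refine le_of_pow_le_pow_left₀ two_ne_zero (by positivity) ?_
    have : (1 / (2*Real.sqrt ((n:ℝ)+1)))^2 = 1 / (4*((n:ℝ)+1)) := by
      rw [div_pow, mul_pow, Real.sq_sqrt hn1.le]; norm_num
    rw [this]; exact b_sq_ge n
  rw [aC_eq, show 1 / (2*(((n:ℝ)+1) * Real.sqrt ((n:ℝ)+1)))
      = (1 / (2*Real.sqrt ((n:ℝ)+1)))/((n:ℝ)+1) by field_simp]
  gcongr

/-! ### Square-root gap estimates and telescoping sums -/

lemma gap_le {c : ℝ} (hc : 0 < c) :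
    1/Real.sqrt c - 1/Real.sqrt (c+1) ≤ 1/(2*(c*Real.sqrt c)) := by
  set u := Real.sqrt c with hu_def
  set v := Real.sqrt (c+1) with hv_def
  have hu : u^2 = c := Real.sq_sqrt hc.le
  have hv : v^2 = c+1 := Real.sq_sqrt (by linarith)
  have hu0 : 0 < u := Real.sqrt_pos.2 hc
  have hv0 : 0 < v := Real.sqrt_pos.2 (by linarith)
  have huv : u < v := Real.sqrt_lt_sqrt hc.le (by linarith)
  have h1 : (v-u)*(v+u) = 1 := by nlinarith
  rw [div_sub_div _ _ (ne_of_gt hu0) (ne_of_gt hv0),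
    div_le_div_iff₀ (by positivity) (by positivity)]
  have hc' : c = u^2 := hu.symm
  rw [hc']
  have key : 2*u^3 ≤ u*v*(u+v) := by
    nlinarith [mul_pos (mul_pos hu0 hu0) (sub_pos.2 huv), mul_pos (mul_pos hu0 hv0) (sub_pos.2 huv),
      mul_pos hu0 (mul_pos (sub_pos.2 huv) (by linarith : (0:ℝ) < v + u))]
  have h3 : (v-u)*(2*u^3) ≤ (v-u)*(u*v*(u+v)) := mul_le_mul_of_nonneg_left key (sub_pos.2 huv).le
  have h4 : (v-u)*(u*v*(u+v)) = u*v := by linear_combination (u*v)*h1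
  nlinarith [h3, h4]

lemma gap_ge {c : ℝ} (hc : 0 < c) :
    1/(2*((c+1)*Real.sqrt (c+1))) ≤ 1/Real.sqrt c - 1/Real.sqrt (c+1) := by
  set u := Real.sqrt c with hu_def
  set v := Real.sqrt (c+1) with hv_def
  have hu : u^2 = c := Real.sq_sqrt hc.le
  have hv : v^2 = c+1 := Real.sq_sqrt (by linarith)
  have hu0 : 0 < u := Real.sqrt_pos.2 hc
  have hv0 : 0 < v := Real.sqrt_pos.2 (by linarith)
  have huv : u < v := Real.sqrt_lt_sqrt hc.le (by linarith)
  have h1 : (v-u)*(v+u) = 1 := by nlinarith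
  rw [div_sub_div _ _ (ne_of_gt hu0) (ne_of_gt hv0),
    div_le_div_iff₀ (by positivity) (by positivity)]
  have hc' : c+1 = v^2 := hv.symm
  rw [hc']
  have key : u*v*(u+v) ≤ 2*v^3 := by
    nlinarith [mul_pos (mul_pos hv0 hv0) (sub_pos.2 huv), mul_pos (mul_pos hu0 hv0) (sub_pos.2 huv),
      mul_pos hv0 (mul_pos (sub_pos.2 huv) (by linarith : (0:ℝ) < v + u))]
  have h3 : (v-u)*(u*v*(u+v)) ≤ (v-u)*(2*v^3) := mul_le_mul_of_nonneg_left key (sub_pos.2 huv).le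
  have h4 : (v-u)*(u*v*(u+v)) = u*v := by linear_combination (u*v)*h1
  nlinarith [h3, h4]

/-- `G n = 1/√(n+1)`. -/
def G (n : ℕ) : ℝ := 1/Real.sqrt ((n:ℝ)+1)

lemma G_pos (n : ℕ) : 0 < G n := by
  have : (0:ℝ) < (n:ℝ)+1 := by positivity
  exact div_pos one_pos (Real.sqrt_pos.2 this)

lemma G_anti {j k : ℕ} (h : j ≤ k) : G k ≤ G j := by
  have h1 : (0:ℝ) < (j:ℝ)+1 := by positivity
  apply one_div_le_one_div_of_le (Real.sqrt_pos.2 h1)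
  apply Real.sqrt_le_sqrt
  have : (j:ℝ) ≤ k := Nat.cast_le.2 h
  linarith

lemma G_tendsto : Tendsto G atTop (nhds 0) := by
  have hsq : Tendsto Real.sqrt atTop atTop := by
    refine tendsto_atTop_atTop.2 fun b => ⟨(max b 0)^2, fun a ha => ?_⟩
    calc b ≤ max b 0 := le_max_left _ _
      _ = Real.sqrt ((max b 0)^2) := (Real.sqrt_sq (le_max_right _ _)).symm
      _ ≤ Real.sqrt a := Real.sqrt_le_sqrt ha
  have hcast : Tendsto (fun n : ℕ => (n:ℝ)+1) atTop atTop :=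
    tendsto_atTop_add_const_right _ 1 tendsto_natCast_atTop_atTop
  have := tendsto_inv_atTop_zero.comp (hsq.comp hcast)
  exact this.congr fun n => by simp [G, Function.comp, one_div]

lemma hasSum_G (j : ℕ) : HasSum (fun k => G (j+k) - G (j+k+1)) (G j) := by
  rw [hasSum_iff_tendsto_nat_of_nonneg]
  · have hps : ∀ n : ℕ, ∑ k ∈ Finset.range n, (G (j+k) - G (j+k+1)) = G j - G (j+n) := by
      intro n
      exact Finset.sum_range_sub' (fun k => G (j+k)) n
    simp only [hps]
    have h2 : Tendsto (fun n : ℕ => G (j+n)) atTop (nhds 0) := by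
      have : Tendsto (fun n : ℕ => j+n) atTop atTop := by
        simpa [Nat.add_comm] using tendsto_add_atTop_nat j
      exact G_tendsto.comp this
    simpa using (tendsto_const_nhds (x := G j)).sub h2
  · intro k
    have := G_anti (Nat.le_succ (j+k))
    simp only [sub_nonneg]
    exact this

/-! ### Comparison of `aC` with the telescoping sequence -/

lemma aC_le_gap (n : ℕ) : aC (n+1) ≤ 2*(G n - G (n+1)) := by
  have hc : (0:ℝ) < (n:ℝ)+1 := by positivity
  have h1 := gap_ge hc
  have h2 := aC_le (n+1)
  have hcast : ((n+1 : ℕ) : ℝ) = (n:ℝ)+1 := by push_cast; ring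
  rw [hcast] at h2
  have hG : G n = 1/Real.sqrt ((n:ℝ)+1) := rfl
  have hG' : G (n+1) = 1/Real.sqrt (((n:ℝ)+1)+1) := by
    rw [G, hcast]
  have hA : (0:ℝ) < (((n:ℝ)+1)+1) * Real.sqrt (((n:ℝ)+1)+1) := by positivity
  have heq : 1 / ((((n:ℝ)+1)+1) * Real.sqrt (((n:ℝ)+1)+1))
      = 2 * (1/(2*(((((n:ℝ)+1))+1)*Real.sqrt ((((n:ℝ)+1))+1)))) := by
    field_simp
  rw [hG, hG']
  linarith [h1, h2]

lemma gap_le_aC (n : ℕ) : G (n+1) - G (n+2) ≤ aC (n+1) := by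
  have hc : (0:ℝ) < (n:ℝ)+2 := by positivity
  have h1 := gap_le hc
  have h2 := aC_ge (n+1)
  have hcast : ((n+1 : ℕ) : ℝ) = (n:ℝ)+1 := by push_cast; ring
  rw [hcast] at h2
  have e : ((n:ℝ)+1)+1 = (n:ℝ)+2 := by ring
  rw [e] at h2
  have hG : G (n+1) = 1/Real.sqrt ((n:ℝ)+2) := by
    rw [G]; congr 2; push_cast; ring
  have hG' : G (n+2) = 1/Real.sqrt (((n:ℝ)+2)+1) := by
    rw [G]; congr 2; push_cast; ring
  rw [hG, hG']
  linarith [h1, h2]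

lemma summable_aC : Summable aC := by
  have h1 : Summable (fun n : ℕ => 2*(G n - G (n+1))) := by
    have := (hasSum_G 0).summable.mul_left 2
    refine this.congr fun n => ?_
    simp [Nat.zero_add]
  have h2 : Summable (fun n : ℕ => aC (n+1)) :=
    Summable.of_nonneg_of_le (fun n => aC_nonneg _) (fun n => aC_le_gap n) h1
  exact (summable_nat_add_iff 1).1 h2

/-! ### Tails -/

/-- Tail of the normalized Catalan sum. -/
def tl (m : ℕ) : ℝ := ∑' n : ℕ, if m < n then aC n else 0

/-- Weighted tail. -/
def stl (x : ℝ) (m : ℕ) : ℝ := ∑' n : ℕ, if m < n then aC n * x^n else 0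

lemma sm_ind (m : ℕ) : Summable (fun n : ℕ => if m < n then aC n else 0) := by
  refine Summable.of_nonneg_of_le (fun n => ?_) (fun n => ?_) summable_aC
  · split <;> simp [aC_nonneg]
  · split <;> simp [aC_nonneg]

lemma sm_wind {x : ℝ} (hx0 : 0 ≤ x) (hx1 : x ≤ 1) (m : ℕ) :
    Summable (fun n : ℕ => if m < n then aC n * x^n else 0) := by
  refine Summable.of_nonneg_of_le (fun n => ?_) (fun n => ?_) (sm_ind m)
  · by_cases h : m < n
    · simp only [if_pos h]
      exact mul_nonneg (aC_nonneg _) (pow_nonneg hx0 _)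
    · simp [if_neg h]
  · by_cases h : m < n
    · simp only [if_pos h]
      calc aC n * x^n ≤ aC n * 1 :=
            mul_le_mul_of_nonneg_left (pow_le_one₀ hx0 hx1) (aC_nonneg _)
        _ = aC n := mul_one _
    · simp [if_neg h]

lemma tl_eq (m : ℕ) : tl m = ∑' k : ℕ, aC (m+k+1) := by
  rw [tl, ← (sm_ind m).sum_add_tsum_nat_add (m+1)]
  have h1 : ∑ i ∈ Finset.range (m+1), (if m < i then aC i else 0) = 0 := by
    refine Finset.sum_eq_zero fun i hi => ?_
    rw [Finset.mem_range] at hi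
    exact if_neg (by omega)
  rw [h1, zero_add]
  refine tsum_congr fun k => ?_
  rw [if_pos (by omega), show k + (m+1) = m+k+1 by omega]

lemma summable_tail (m : ℕ) : Summable (fun k : ℕ => aC (m+k+1)) := by
  have := (summable_nat_add_iff (m+1)).2 summable_aC
  exact this.congr fun k => by rw [show k + (m+1) = m+k+1 by omega]

lemma tl_le (m : ℕ) : tl m ≤ 2/Real.sqrt ((m:ℝ)+1) := by
  rw [tl_eq]
  have hsum2 : HasSum (fun k : ℕ => 2*(G (m+k) - G (m+k+1))) (2 * G m) := (hasSum_G m).mul_left 2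
  have hle : ∑' k : ℕ, aC (m+k+1) ≤ ∑' k : ℕ, 2*(G (m+k) - G (m+k+1)) := by
    refine Summable.tsum_le_tsum (fun k => ?_) (summable_tail m) hsum2.summable
    exact aC_le_gap (m+k)
  calc ∑' k : ℕ, aC (m+k+1) ≤ ∑' k : ℕ, 2*(G (m+k) - G (m+k+1)) := hle
    _ = 2 * G m := hsum2.tsum_eq
    _ = 2/Real.sqrt ((m:ℝ)+1) := by rw [G]; ring

lemma tl_ge (m : ℕ) : 1/Real.sqrt ((m:ℝ)+2) ≤ tl m := by
  rw [tl_eq]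
  have hsum2 : HasSum (fun k : ℕ => G ((m+1)+k) - G ((m+1)+k+1)) (G (m+1)) := hasSum_G (m+1)
  have hge : ∑' k : ℕ, (G ((m+1)+k) - G ((m+1)+k+1)) ≤ ∑' k : ℕ, aC (m+k+1) := by
    refine Summable.tsum_le_tsum (fun k => ?_) hsum2.summable (summable_tail m)
    have := gap_le_aC (m+k)
    rw [show (m+1)+k = m+k+1 by omega, show m+k+1+1 = m+k+2 by omega]
    exact this
  have hGm : G (m+1) = 1/Real.sqrt ((m:ℝ)+2) := by
    rw [G]; congr 2; push_cast; ring
  calc 1/Real.sqrt ((m:ℝ)+2) = G (m+1) := hGm.symm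
    _ = ∑' k : ℕ, (G ((m+1)+k) - G ((m+1)+k+1)) := hsum2.tsum_eq.symm
    _ ≤ ∑' k : ℕ, aC (m+k+1) := hge

lemma tl_pos (m : ℕ) : 0 < tl m := by
  have h : (0:ℝ) < 1/Real.sqrt ((m:ℝ)+2) := by
    have : (0:ℝ) < (m:ℝ)+2 := by positivity
    exact div_pos one_pos (Real.sqrt_pos.2 this)
  exact h.trans_le (tl_ge m)

lemma stl_le_tl {x : ℝ} (hx0 : 0 ≤ x) (hx1 : x ≤ 1) (m : ℕ) : stl x m ≤ tl m := by
  refine Summable.tsum_le_tsum (fun n => ?_) (sm_wind hx0 hx1 m) (sm_ind m)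
  by_cases h : m < n
  · simp only [if_pos h]
    calc aC n * x^n ≤ aC n * 1 :=
          mul_le_mul_of_nonneg_left (pow_le_one₀ hx0 hx1) (aC_nonneg _)
      _ = aC n := mul_one _
  · simp [if_neg h]

lemma diff_le {x y : ℝ} (hx0 : 0 ≤ x) (hx1 : x ≤ 1) (hy : 1 - x ≤ y) (hy0 : 0 ≤ y) (m N : ℕ) :
    tl m - stl x m ≤ ((N:ℝ)*y)*(tl m) + tl N := by
  have hsum1 := sm_ind m
  have hsum2 := sm_wind hx0 hx1 m
  have hdiff_eq : tl m - stl x m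
      = ∑' n : ℕ, ((if m < n then aC n else 0) - (if m < n then aC n * x^n else 0)) := by
    rw [tl, stl, Summable.tsum_sub hsum1 hsum2]
  have hpt : ∀ n : ℕ, ((if m < n then aC n else 0) - (if m < n then aC n * x^n else 0))
      ≤ (if m < n then aC n else 0)*((N:ℝ)*y) + (if N < n then aC n else 0) := by
    intro n
    by_cases h1 : m < n
    · simp only [if_pos h1]
      by_cases h2 : N < n
      · simp only [if_pos h2]
        have hxn : 0 ≤ x^n := pow_nonneg hx0 n
        have hNy : 0 ≤ (N:ℝ)*y := mul_nonneg (Nat.cast_nonneg _) hy0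
        nlinarith [aC_nonneg n, mul_nonneg (aC_nonneg n) hNy, mul_nonneg (aC_nonneg n) hxn]
      · simp only [if_neg h2]
        have hn_le : n ≤ N := Nat.le_of_not_lt h2
        have hbern : 1 + (n:ℝ)*(x-1) ≤ x^n := by
          have := one_add_mul_le_pow (show (-2:ℝ) ≤ x - 1 by linarith) n
          calc 1 + (n:ℝ)*(x-1) ≤ (1+(x-1))^n := this
            _ = x^n := by norm_num
        have h1x : 1 - x^n ≤ (N:ℝ)*y := by
          have hnN : (n:ℝ) ≤ N := Nat.cast_le.2 hn_le
          have hx1' : 0 ≤ 1 - x := by linarith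
          nlinarith [mul_le_mul_of_nonneg_left hy (Nat.cast_nonneg (α := ℝ) n),
            mul_le_mul_of_nonneg_right hnN hy0]
        nlinarith [aC_nonneg n]
    · simp only [if_neg h1]
      have : (0:ℝ) ≤ (if N < n then aC n else 0) := by split <;> simp [aC_nonneg]
      linarith
  have hsum3 : Summable (fun n : ℕ => (if m < n then aC n else 0)*((N:ℝ)*y)) :=
    hsum1.mul_right _
  calc tl m - stl x m
      = ∑' n : ℕ, ((if m < n then aC n else 0) - (if m < n then aC n * x^n else 0)) := hdiff_eq
    _ ≤ ∑' n : ℕ, ((if m < n then aC n else 0)*((N:ℝ)*y) + (if N < n then aC n else 0)) :=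
        Summable.tsum_le_tsum hpt (hsum1.sub hsum2) (hsum3.add (sm_ind N))
    _ = ((N:ℝ)*y)*(tl m) + tl N := by
        rw [Summable.tsum_add hsum3 (sm_ind N), tsum_mul_right]
        simp only [tl]
        ring

/-! ### Rewriting `qdel` -/

lemma qdel_eq (δ : ℝ) (L : ℕ) :
    qdel δ L = (1+2*δ)/2 * stl (1-4*δ^2) ((L-1)/2) := by
  have hterm : ∀ n : ℕ, (catalan n : ℝ) * (1/2 - δ) ^ n * (1 - (1/2 - δ)) ^ (n + 1)
      = (1+2*δ)/2 * (aC n * (1-4*δ^2)^n) := by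
    intro n
    rw [show (1 - (1/2 - δ)) = (1/2+δ) by ring, pow_succ, aC]
    have key : ((1:ℝ)/2 - δ)^n * (1/2+δ)^n = (1-4*δ^2)^n / 4^n := by
      rw [← mul_pow, ← div_pow]
      congr 1
      ring
    calc (catalan n : ℝ) * (1/2 - δ)^n * ((1/2+δ)^n * (1/2+δ))
        = (catalan n : ℝ) * ((1/2-δ)^n * (1/2+δ)^n) * (1/2+δ) := by ring
      _ = (catalan n : ℝ) * ((1-4*δ^2)^n / 4^n) * (1/2+δ) := by rw [key]
      _ = (1+2*δ)/2 * ((catalan n : ℝ)/4^n * (1-4*δ^2)^n) := by ring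
  rw [qdel]
  have : ∀ n : ℕ, (if (L-1)/2 < n then (catalan n : ℝ) * (1/2 - δ) ^ n * (1 - (1/2 - δ)) ^ (n + 1) else 0)
      = (1+2*δ)/2 * (if (L-1)/2 < n then aC n * (1-4*δ^2)^n else 0) := by
    intro n
    split
    · exact hterm n
    · simp
  rw [tsum_congr this, tsum_mul_left, stl]

lemma qdel_zero_eq (L : ℕ) : qdel 0 L = tl ((L-1)/2) / 2 := by
  rw [qdel_eq]
  have : stl (1 - 4*(0:ℝ)^2) ((L-1)/2) = tl ((L-1)/2) := by
    rw [stl, tl]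
    refine tsum_congr fun n => ?_
    split <;> simp
  rw [this]
  ring

end CatalanTailAux

open CatalanTailAux

/-- **Uniform tail comparison for `L ≪ δ^(-2)`.** For every `ε > 0` there are
`δ₀ > 0` and `s > 0` such that for all `δ ∈ (0, δ₀)` and all integers `1 ≤ L ≤ s δ^(-2)`,
`|q_δ(L)/q₀(L) - 1| < ε`. -/
theorem tail_ratio_close_to_one :
    ∀ ε : ℝ, 0 < ε → ∃ δ₀ : ℝ, 0 < δ₀ ∧ ∃ s : ℝ, 0 < s ∧
      ∀ δ : ℝ, 0 < δ → δ < δ₀ → δ < 1/2 →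
        ∀ L : ℕ, 1 ≤ L → (L : ℝ) ≤ s * δ ^ (-(2 : ℝ)) →
          |qdel δ L / qdel 0 L - 1| < ε := by
  intro ε hε
  set η : ℝ := min ε 1 / 2 with hη_def
  have hmin : 0 < min ε 1 := lt_min hε one_pos
  have hη : 0 < η := by rw [hη_def]; positivity
  have hηε : η ≤ ε/2 := by
    rw [hη_def]
    have : min ε 1 ≤ ε := min_le_left _ _
    linarith
  have hη1 : η ≤ 1/2 := by
    rw [hη_def]
    have : min ε 1 ≤ 1 := min_le_right _ _
    linarith
  set K : ℕ := ⌈(16:ℝ)/η^2⌉₊ + 1 with hK_def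
  have hK0 : 0 < K := Nat.succ_pos _
  have hK0' : (0:ℝ) < K := by exact_mod_cast hK0
  have hKge : (16:ℝ)/η^2 ≤ K := by
    calc (16:ℝ)/η^2 ≤ ⌈(16:ℝ)/η^2⌉₊ := Nat.le_ceil _
      _ ≤ K := by exact_mod_cast Nat.le_succ _
  refine ⟨ε/2, by positivity, η/(16*(K:ℝ)), div_pos hη (by positivity), ?_⟩
  intro δ hδ0 hδε hδhalf L hL1 hLs
  set m : ℕ := (L-1)/2 with hm_def
  set N : ℕ := K*(m+2) with hN_def
  set x : ℝ := 1 - 4*δ^2 with hx_def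
  have hδ2 : (0:ℝ) < δ^2 := by positivity
  have hx0 : 0 ≤ x := by rw [hx_def]; nlinarith
  have hx1 : x ≤ 1 := by rw [hx_def]; nlinarith
  -- the rpow hypothesis
  have hrp : δ ^ (-(2:ℝ)) = (δ^2)⁻¹ := by
    rw [show (-(2:ℝ)) = ((-2:ℤ):ℝ) by norm_num, Real.rpow_intCast,
      show (-2:ℤ) = -(2:ℤ) by norm_num, zpow_neg]
    congr 1
  have hLδ : (L:ℝ)*δ^2 ≤ η/(16*(K:ℝ)) := by
    rw [hrp] at hLs
    calc (L:ℝ)*δ^2 ≤ (η/(16*(K:ℝ)) * (δ^2)⁻¹)*δ^2 := by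
          exact mul_le_mul_of_nonneg_right hLs hδ2.le
      _ = η/(16*(K:ℝ)) := by field_simp
  -- bound on N * (4 δ²)
  have hmL : (m:ℝ) + 2 ≤ 2*(L:ℝ) := by
    have h1 : m + 2 ≤ 2*L := by
      have : m ≤ L - 1 := Nat.div_le_self _ _
      omega
    exact_mod_cast h1
  have hNcast : (N:ℝ) = (K:ℝ)*((m:ℝ)+2) := by rw [hN_def]; push_cast; ring
  have hNy : (N:ℝ)*(4*δ^2) ≤ η/2 := by
    calc (N:ℝ)*(4*δ^2) = 4*(K:ℝ)*(((m:ℝ)+2)*δ^2) := by rw [hNcast]; ring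
      _ ≤ 4*(K:ℝ)*((2*(L:ℝ))*δ^2) := by
          refine mul_le_mul_of_nonneg_left ?_ (by positivity)
          exact mul_le_mul_of_nonneg_right hmL hδ2.le
      _ = 8*(K:ℝ)*((L:ℝ)*δ^2) := by ring
      _ ≤ 8*(K:ℝ)*(η/(16*(K:ℝ))) := by
          refine mul_le_mul_of_nonneg_left hLδ (by positivity)
      _ = η/2 := by field_simp; ring
  -- tail bounds
  have hTm_pos : 0 < tl m := tl_pos m
  have hsK : 4/η ≤ Real.sqrt (K:ℝ) := by
    refine Real.le_sqrt_of_sq_le ?_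
    calc (4/η)^2 = 16/η^2 := by rw [div_pow]; norm_num
      _ ≤ (K:ℝ) := hKge
  have hsK_pos : (0:ℝ) < Real.sqrt (K:ℝ) := Real.sqrt_pos.2 hK0'
  have hm2_pos : (0:ℝ) < (m:ℝ)+2 := by positivity
  have hsm2_pos : (0:ℝ) < Real.sqrt ((m:ℝ)+2) := Real.sqrt_pos.2 hm2_pos
  have hTN : tl N ≤ (η/2) * tl m := by
    have hN_pos : (0:ℝ) < (N:ℝ) := by
      rw [hNcast]; positivity
    have hsN : Real.sqrt ((N:ℝ)) ≤ Real.sqrt ((N:ℝ)+1) := Real.sqrt_le_sqrt (by linarith)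
    have hsN_pos : (0:ℝ) < Real.sqrt (N:ℝ) := Real.sqrt_pos.2 hN_pos
    have hsplit : Real.sqrt (N:ℝ) = Real.sqrt K * Real.sqrt ((m:ℝ)+2) := by
      rw [hNcast, Real.sqrt_mul (by positivity)]
    calc tl N ≤ 2/Real.sqrt ((N:ℝ)+1) := tl_le N
      _ ≤ 2/Real.sqrt ((N:ℝ)) := by
          exact (div_le_div_iff_of_pos_left (by norm_num) (Real.sqrt_pos.2 (by linarith)) hsN_pos).2 hsN
      _ = 2/(Real.sqrt K * Real.sqrt ((m:ℝ)+2)) := by rw [hsplit]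
      _ ≤ (η/2) * (1/Real.sqrt ((m:ℝ)+2)) := by
          rw [div_le_iff₀ (by positivity)]
          have h44 : 4 ≤ η * Real.sqrt K := by
            have := mul_le_mul_of_nonneg_left hsK hη.le
            calc (4:ℝ) = η * (4/η) := by field_simp
              _ ≤ η * Real.sqrt K := this
          calc (2:ℝ) = (4:ℝ)/2 := by norm_num
            _ ≤ (η * Real.sqrt K)/2 := by linarith
            _ = η/2 * (1/Real.sqrt ((m:ℝ)+2)) * (Real.sqrt K * Real.sqrt ((m:ℝ)+2)) := by
                field_simp
      _ ≤ (η/2) * tl m := by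
          refine mul_le_mul_of_nonneg_left ?_ (by positivity)
          exact tl_ge m
  -- the main estimate
  have hdiff : tl m - stl x m ≤ η * tl m := by
    have h1x : 1 - x ≤ 4*δ^2 := le_of_eq (by rw [hx_def]; ring)
    have hbd := diff_le (y := 4*δ^2) hx0 hx1 h1x (by positivity) m N
    calc tl m - stl x m ≤ ((N:ℝ)*(4*δ^2))*(tl m) + tl N := hbd
      _ ≤ (η/2)*(tl m) + (η/2)*(tl m) := by
          refine add_le_add ?_ hTN
          exact mul_le_mul_of_nonneg_right hNy hTm_pos.le
      _ = η * tl m := by ring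
  have hstl_le : stl x m ≤ tl m := stl_le_tl hx0 hx1 m
  have hstl_ge : (1-η)*tl m ≤ stl x m := by linarith [hdiff]
  -- ratio computation
  have hq : qdel δ L = (1+2*δ)/2 * stl x m := by rw [qdel_eq, hm_def, hx_def]
  have hq0 : qdel 0 L = tl m / 2 := by rw [qdel_zero_eq, hm_def]
  rw [hq, hq0]
  have hr : (1+2*δ)/2 * stl x m / (tl m / 2) = (1+2*δ) * (stl x m / tl m) := by
    field_simp
  rw [hr]
  set r : ℝ := stl x m / tl m with hr_def
  have hr1 : r ≤ 1 := by
    rw [hr_def, div_le_one hTm_pos]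
    exact hstl_le
  have hr0 : 1 - η ≤ r := by
    rw [hr_def, le_div_iff₀ hTm_pos]
    calc (1-η) * tl m ≤ stl x m := hstl_ge
      _ = stl x m := rfl
  have hrnn : 0 ≤ r := by
    have : (0:ℝ) ≤ stl x m := by
      refine tsum_nonneg fun n => ?_
      split
      · exact mul_nonneg (aC_nonneg _) (pow_nonneg hx0 _)
      · exact le_refl 0
    exact div_nonneg this hTm_pos.le
  clear_value r x N m K η
  rw [abs_lt]
  constructor
  · -- 1 - ε < (1+2δ) r
    have h1 : 1 - η ≤ (1+2*δ)*r :=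
      hr0.trans (le_mul_of_one_le_left hrnn (by linarith))
    have : 1 - ε < 1 - η := by linarith [hηε, hε]
    linarith
  · -- (1+2δ) r - 1 < ε
    have h1 : (1+2*δ)*r ≤ 1+2*δ := mul_le_of_le_one_right (by linarith) hr1
    have h2 : 2*δ < ε := by linarith
    linarith
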